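/- Let T : S × S → ℝ (with T_{ij} arbitrary for (i,j) ∈ B), let p̃_{ij} = Q̃_{ij}/μ̃_i, and define A : S × S → ℝ by A_{ij} = p̃_{ij}·exp( T_{ij}/(κκ') ) for (i,j) ∈ B and A_{ij} = 0 otherwise. Let ρ > 0 and γ : S → ℝ with γ_i > 0 for all i. Suppose Q̃ ∈ Q(B) and Q ∈ Q(B) are such that Q̂ = (1−κ)·Q̃ + κ·Q satisfies μ̂_i > 0 for all i ∈ S and Q̂_{ij}/μ̂_i = A_{ij}·γ_j/(ρ·γ_i) for all (i,j) ∈ B. Then the surrogate function with linear coefficients T evaluates at Q to ψ_{Q̃}(Q) = Σ_{(i,j)∈B} Q_{ij}·T_{ij} − ψ̄_{Q̃}(Q) = κ'·log ρ − ((1−κ)/κ)·Σ_{(i,j)∈B} Q̃_{ij}·T_{ij}. In particular, if κ = 1 then ψ_{Q̃}(Q) = κ'·log ρ. -/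

import Mathlib

/-!
Write `p̂_{ij} = Q̂_{ij}/μ̂_i` and `p̃_{ij} = Q̃_{ij}/μ̃_i`. Stationarity says
`log (p̂_{ij}/p̃_{ij}) = T_{ij}/(κκ') + log γ_j - log γ_i - log ρ`, and
`ψ̄/κ' = Σ Q̂_{ij} log (Q̂_{ij}/Q̃_{ij}) - Σ μ̂_i log (μ̂_i/μ̃_i)
      = Σ Q̂_{ij} log (p̂_{ij}/p̃_{ij})`.
Since `Q̂` is flow-balanced the `γ` terms telescope away, and since it has mass one the `log ρ`
term contributes `-log ρ`. Hence `ψ̄ = Σ Q̂_{ij} T_{ij}/κ - κ' log ρ`, and expanding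
`Q̂ = (1-κ)Q̃ + κQ` gives the value of the surrogate.
-/

open Finset

/-- Row sum `μ_i(Q) = Σ_{j : (i,j) ∈ B} Q_{ij}` of an edge measure `Q` supported on `B`. -/
noncomputable def rowSum {S : Type} [Fintype S] [DecidableEq S]
    (B : Finset (S × S)) (Q : S × S → ℝ) (i : S) : ℝ :=
  ∑ j ∈ Finset.univ.filter (fun j => (i, j) ∈ B), Q (i, j)

/-- The shifted edge measure `Q̂_{ij} = (1-κ)·Q̃_{ij} + κ·Q_{ij}`. -/
noncomputable def hatQ {α : Type} (Qt : α → ℝ) (κ : ℝ) (Q : α → ℝ) : α → ℝ :=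
  fun e => (1 - κ) * Qt e + κ * Q e

/-- The surrogate penalty function
`ψ̄_{Q̃}(Q) = κ'·( Σ_{(i,j)∈B} Q̂_{ij}·log(Q̂_{ij}/Q̃_{ij}) − Σ_{i∈S} μ̂_i·log(μ̂_i/μ̃_i) )`,
with the convention `0·log(0/b) = 0` (automatic, since `Real.log 0 = 0`). -/
noncomputable def psibar {S : Type} [Fintype S] [DecidableEq S]
    (B : Finset (S × S)) (Qt : S × S → ℝ) (κ κ' : ℝ) (Q : S × S → ℝ) : ℝ :=
  κ' * ((∑ e ∈ B, hatQ Qt κ Q e * Real.log (hatQ Qt κ Q e / Qt e)) -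
        ∑ i : S, rowSum B (hatQ Qt κ Q) i *
          Real.log (rowSum B (hatQ Qt κ Q) i / rowSum B Qt i))

/-- Membership in the polytope `Q(B)`: nonnegative on `B`, vanishing off `B`,
total mass one, and flow-balanced. -/
def memEdgePolytope {S : Type} [Fintype S] [DecidableEq S]
    (B : Finset (S × S)) (Q : S × S → ℝ) : Prop :=
  (∀ e ∈ B, 0 ≤ Q e) ∧ (∀ e ∉ B, Q e = 0) ∧
  (∑ e ∈ B, Q e = 1) ∧
  ∀ i : S,
    (∑ j ∈ Finset.univ.filter (fun j => (i, j) ∈ B), Q (i, j)) =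
    (∑ k ∈ Finset.univ.filter (fun k => (k, i) ∈ B), Q (k, i))

section EdgeSums

variable {S : Type} [Fintype S] [DecidableEq S] (B : Finset (S × S))

noncomputable def colSum (Q : S × S → ℝ) (j : S) : ℝ :=
  ∑ i ∈ Finset.univ.filter (fun i => (i, j) ∈ B), Q (i, j)

theorem sum_eq_sum_rowSum (F : S × S → ℝ) : ∑ e ∈ B, F e = ∑ i, rowSum B F i :=
  Finset.sum_finset_product B univ (fun i => univ.filter (fun j => (i, j) ∈ B)) (by simp)
    (f := F)

theorem sum_eq_sum_colSum (F : S × S → ℝ) : ∑ e ∈ B, F e = ∑ j, colSum B F j :=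
  Finset.sum_finset_product_right B univ (fun j => univ.filter (fun i => (i, j) ∈ B)) (by simp)
    (f := F)

theorem sum_mul_fst_eq_sum_rowSum_mul (F : S × S → ℝ) (g : S → ℝ) :
    ∑ e ∈ B, F e * g e.1 = ∑ i, rowSum B F i * g i := by
  rw [sum_eq_sum_rowSum]
  simp only [rowSum, Finset.sum_mul]

theorem sum_mul_snd_eq_sum_colSum_mul (F : S × S → ℝ) (g : S → ℝ) :
    ∑ e ∈ B, F e * g e.2 = ∑ j, colSum B F j * g j := by
  rw [sum_eq_sum_colSum]
  simp only [colSum, Finset.sum_mul]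

theorem sum_mul_snd_eq_sum_mul_fst {F : S × S → ℝ} (hF : ∀ i, rowSum B F i = colSum B F i)
    (g : S → ℝ) : ∑ e ∈ B, F e * g e.2 = ∑ e ∈ B, F e * g e.1 := by
  simp only [sum_mul_snd_eq_sum_colSum_mul, sum_mul_fst_eq_sum_rowSum_mul, hF]

theorem rowSum_pos {F : S × S → ℝ} (hF : ∀ e ∈ B, 0 < F e) {e : S × S} (he : e ∈ B) :
    0 < rowSum B F e.1 :=
  Finset.sum_pos (fun j hj => hF _ (Finset.mem_filter.1 hj).2) ⟨e.2, by simpa using he⟩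

end EdgeSums

theorem sum_hatQ_comp {ι α : Type} (Qt Q : α → ℝ) (κ : ℝ) (s : Finset ι) (f : ι → α) :
    ∑ x ∈ s, hatQ Qt κ Q (f x) = (1 - κ) * ∑ x ∈ s, Qt (f x) + κ * ∑ x ∈ s, Q (f x) := by
  simp only [hatQ, Finset.sum_add_distrib, Finset.mul_sum]

theorem sum_hatQ_mul {α : Type} (Qt Q : α → ℝ) (κ : ℝ) (s : Finset α) (w : α → ℝ) :
    ∑ e ∈ s, hatQ Qt κ Q e * w e = (1 - κ) * ∑ e ∈ s, Qt e * w e + κ * ∑ e ∈ s, Q e * w e := by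
  simp only [hatQ, add_mul, mul_assoc, Finset.sum_add_distrib, Finset.mul_sum]

namespace memEdgePolytope

variable {S : Type} [Fintype S] [DecidableEq S] {B : Finset (S × S)} {Qt Q : S × S → ℝ}

theorem sum_hatQ_eq_one (hQt : memEdgePolytope B Qt) (hQ : memEdgePolytope B Q) (κ : ℝ) :
    ∑ e ∈ B, hatQ Qt κ Q e = 1 := by
  obtain ⟨-, -, hQtmass, -⟩ := hQt
  obtain ⟨-, -, hQmass, -⟩ := hQ
  have h := sum_hatQ_comp Qt Q κ B id
  simp only [id, hQtmass, hQmass] at h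
  rw [h]
  ring

theorem rowSum_hatQ_eq_colSum (hQt : memEdgePolytope B Qt) (hQ : memEdgePolytope B Q) (κ : ℝ)
    (i : S) : rowSum B (hatQ Qt κ Q) i = colSum B (hatQ Qt κ Q) i := by
  rw [rowSum, colSum, sum_hatQ_comp, sum_hatQ_comp, hQt.2.2.2 i, hQ.2.2.2 i]

end memEdgePolytope

theorem log_div_eq_of_div_eq {x q m n t g₁ g₂ ρ : ℝ} (hq : q ≠ 0) (hm : m ≠ 0) (hn : n ≠ 0)
    (hg₁ : g₁ ≠ 0) (hg₂ : g₂ ≠ 0) (hρ : ρ ≠ 0)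
    (h : x / m = q / n * Real.exp t * g₂ / (ρ * g₁)) :
    Real.log (x / q) = t + Real.log g₂ - Real.log g₁ - Real.log ρ + Real.log (m / n) := by
  have hx : x / q = Real.exp t * (g₂ / (ρ * g₁)) * (m / n) := by
    rw [div_eq_iff hm] at h
    rw [h]
    field_simp
  rw [hx, Real.log_mul (by positivity) (by positivity),
    Real.log_mul (by positivity) (by positivity), Real.log_exp, Real.log_div hg₂ (by positivity), Real.log_mul hρ hg₁]
  ring

section Stationary

variable {S : Type} [Fintype S] [DecidableEq S] {B : Finset (S × S)} {Qt Q T A : S × S → ℝ}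
  {κ κ' ρ : ℝ} {γ : S → ℝ}

theorem log_hatQ_div_eq_of_stationary (hQtpos : ∀ e ∈ B, 0 < Qt e)
    (hA : ∀ e ∈ B, A e = (Qt e / rowSum B Qt e.1) * Real.exp (T e / (κ * κ')))
    (hρ : ρ ≠ 0) (hγ : ∀ i, γ i ≠ 0) (hμ : ∀ i, rowSum B (hatQ Qt κ Q) i ≠ 0)
    (hstat : ∀ e ∈ B,
      hatQ Qt κ Q e / rowSum B (hatQ Qt κ Q) e.1 = A e * γ e.2 / (ρ * γ e.1))
    {e : S × S} (he : e ∈ B) :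
    Real.log (hatQ Qt κ Q e / Qt e) =
      T e / (κ * κ') + Real.log (γ e.2) - Real.log (γ e.1) - Real.log ρ +
        Real.log (rowSum B (hatQ Qt κ Q) e.1 / rowSum B Qt e.1) := by
  refine log_div_eq_of_div_eq (hQtpos e he).ne' (hμ e.1) (rowSum_pos B hQtpos he).ne'
    (hγ e.1) (hγ e.2) hρ ?_
  rw [hstat e he, hA e he]

theorem psibar_eq_of_stationary (hQt : memEdgePolytope B Qt) (hQtpos : ∀ e ∈ B, 0 < Qt e)
    (hκ : κ ≠ 0) (hκ' : κ' ≠ 0)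
    (hA : ∀ e ∈ B, A e = (Qt e / rowSum B Qt e.1) * Real.exp (T e / (κ * κ')))
    (hρ : ρ ≠ 0) (hγ : ∀ i, γ i ≠ 0) (hQ : memEdgePolytope B Q)
    (hμ : ∀ i, rowSum B (hatQ Qt κ Q) i ≠ 0)
    (hstat : ∀ e ∈ B,
      hatQ Qt κ Q e / rowSum B (hatQ Qt κ Q) e.1 = A e * γ e.2 / (ρ * γ e.1)) :
    psibar B Qt κ κ' Q = (∑ e ∈ B, hatQ Qt κ Q e * T e) / κ - κ' * Real.log ρ := by
  set Qh := hatQ Qt κ Q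
  have hterm : ∀ e ∈ B, Qh e * Real.log (Qh e / Qt e) =
      Qh e * T e / (κ * κ') + (Qh e * Real.log (γ e.2) - Qh e * Real.log (γ e.1)) -
        Real.log ρ * Qh e + Qh e * Real.log (rowSum B Qh e.1 / rowSum B Qt e.1) := by
    intro e he
    rw [log_hatQ_div_eq_of_stationary hQtpos hA hρ hγ hμ hstat he]
    ring
  have hentropy : ∑ e ∈ B, Qh e * Real.log (Qh e / Qt e) =
      (∑ e ∈ B, Qh e * T e) / (κ * κ') - Real.log ρ +
        ∑ i, rowSum B Qh i * Real.log (rowSum B Qh i / rowSum B Qt i) := by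
    rw [Finset.sum_congr rfl hterm]
    simp only [Finset.sum_add_distrib, Finset.sum_sub_distrib]
    rw [← Finset.sum_div, ← Finset.mul_sum, hQt.sum_hatQ_eq_one hQ,
      sum_mul_snd_eq_sum_mul_fst B (F := Qh) (hQt.rowSum_hatQ_eq_colSum hQ κ)
        (fun i => Real.log (γ i)), sub_self,
      sum_mul_fst_eq_sum_rowSum_mul B Qh (fun i => Real.log (rowSum B Qh i / rowSum B Qt i))]
    ring
  rw [psibar, hentropy]
  field_simp
  ring

end Stationary

theorem surrogate_value_at_PF_stationary_point_general {S : Type} [Fintype S] [DecidableEq S]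
    (B : Finset (S × S))
    (Qt : S × S → ℝ) (hQt : memEdgePolytope B Qt) (hQtpos : ∀ e ∈ B, 0 < Qt e)
    (κ κ' : ℝ) (hκ0 : 0 < κ) (hκ' : 0 < κ')
    (T : S × S → ℝ)
    (A : S × S → ℝ)
    (hA : ∀ e ∈ B, A e = (Qt e / rowSum B Qt e.1) * Real.exp (T e / (κ * κ')))
    (ρ : ℝ) (hρ : 0 < ρ) (γ : S → ℝ) (hγ : ∀ i, 0 < γ i)
    (Q : S × S → ℝ) (hQ : memEdgePolytope B Q)
    (hμpos : ∀ i : S, 0 < rowSum B (hatQ Qt κ Q) i)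
    (hstat : ∀ e ∈ B,
      hatQ Qt κ Q e / rowSum B (hatQ Qt κ Q) e.1 = A e * γ e.2 / (ρ * γ e.1)) :
    (∑ e ∈ B, Q e * T e) - psibar B Qt κ κ' Q =
      κ' * Real.log ρ - ((1 - κ) / κ) * ∑ e ∈ B, Qt e * T e ∧
    (κ = 1 →
      (∑ e ∈ B, Q e * T e) - psibar B Qt κ κ' Q = κ' * Real.log ρ) := by
  have hpsi := psibar_eq_of_stationary hQt hQtpos hκ0.ne' hκ'.ne' hA hρ.ne'
    (fun i => (hγ i).ne') hQ (fun i => (hμpos i).ne') hstat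
  rw [sum_hatQ_mul] at hpsi
  have hvalue : (∑ e ∈ B, Q e * T e) - psibar B Qt κ κ' Q =
      κ' * Real.log ρ - ((1 - κ) / κ) * ∑ e ∈ B, Qt e * T e := by
    rw [hpsi]
    field_simp
    ring
  refine ⟨hvalue, fun hκ1 => ?_⟩
  rw [hvalue, hκ1]
  simp

/-- With `A_{ij} = p̃_{ij}·exp(T_{ij}/(κκ'))` on `B` (and `0` off `B`),
`ρ > 0`, `γ > 0`, and `Q̃, Q ∈ Q(B)` such that the shifted edge measure
`Q̂ = (1−κ)Q̃ + κQ` has positive row sums and transition probabilities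
`Q̂_{ij}/μ̂_i = A_{ij}·γ_j/(ρ·γ_i)` on `B`, the surrogate function with linear
coefficients `T` evaluates at `Q` to
`Σ_{(i,j)∈B} Q_{ij}·T_{ij} − ψ̄_{Q̃}(Q) = κ'·log ρ − ((1−κ)/κ)·Σ_{(i,j)∈B} Q̃_{ij}·T_{ij}`;
in particular, if `κ = 1` the value is `κ'·log ρ`. -/
theorem surrogate_value_at_PF_stationary_point {S : Type} [Fintype S] [DecidableEq S]
    (B : Finset (S × S)) (hB : ∀ i : S, ∃ j : S, (i, j) ∈ B)
    (Qt : S × S → ℝ) (hQt : memEdgePolytope B Qt) (hQtpos : ∀ e ∈ B, 0 < Qt e)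
    (κ κ' : ℝ) (hκ0 : 0 < κ) (hκ1 : κ ≤ 1) (hκ' : 0 < κ')
    (T : S × S → ℝ)
    (A : S × S → ℝ)
    (hA : ∀ e ∈ B, A e = (Qt e / rowSum B Qt e.1) * Real.exp (T e / (κ * κ')))
    (hAoff : ∀ e ∉ B, A e = 0)
    (ρ : ℝ) (hρ : 0 < ρ) (γ : S → ℝ) (hγ : ∀ i, 0 < γ i)
    (Q : S × S → ℝ) (hQ : memEdgePolytope B Q)
    (hμpos : ∀ i : S, 0 < rowSum B (hatQ Qt κ Q) i)
    (hstat : ∀ e ∈ B,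
      hatQ Qt κ Q e / rowSum B (hatQ Qt κ Q) e.1 = A e * γ e.2 / (ρ * γ e.1)) :
    (∑ e ∈ B, Q e * T e) - psibar B Qt κ κ' Q =
      κ' * Real.log ρ - ((1 - κ) / κ) * ∑ e ∈ B, Qt e * T e ∧
    (κ = 1 →
      (∑ e ∈ B, Q e * T e) - psibar B Qt κ κ' Q = κ' * Real.log ρ) :=
  surrogate_value_at_PF_stationary_point_general B Qt hQt hQtpos κ κ' hκ0 hκ' T A hA ρ hρ γ hγ Q hQ
    hμpos hstat
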